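/- Let n ≥ 1, k ≥ 2, and count the sequences of ordered pairs ((x₁,y₁), …, (x_k,y_k)) with all x_i, y_i ∈ {1, …, n} such that for every i ∈ {2, …, k} the set {x_i, y_i} has nonempty intersection with ∪_{j<i} {x_j, y_j}. The number of such sequences is at most (4k)^{k−1} · n^{k+1}. -/
import Mathlib


open scoped Classical

set_option maxHeartbeats 1000000

/-- One of four matching relations between two pairs. -/
def NCmatchRel {α : Type*} (c : Fin 4) (a b : α × α) : Prop :=
  if c = 0 then a.1 = b.1 else if c = 1 then a.1 = b.2
  else if c = 2 then a.2 = b.1 else a.2 = b.2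

/-- The coordinate of `a` not constrained by the matching `c`. -/
def NCfree {α : Type*} (c : Fin 4) (a : α × α) : α :=
  if (c : ℕ) < 2 then a.2 else a.1

/-- Reconstruct a pair from the matching type, the matched pair, and the free value. -/
def NCrec {α : Type*} (c : Fin 4) (b : α × α) (v : α) : α × α :=
  if c = 0 then (b.1, v) else if c = 1 then (b.2, v)
  else if c = 2 then (v, b.1) else (v, b.2)

theorem NCrec_eq {α : Type*} {c : Fin 4} {a b : α × α}
    (h : NCmatchRel c a b) : NCrec c b (NCfree c a) = a := by
  fin_cases c <;> simp_all [NCmatchRel, NCfree, NCrec, Prod.ext_iff]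

/-- Encoding of a sequence of pairs satisfying the connectivity condition. -/
noncomputable def NCencode {n k : ℕ} (hk : 0 < k) (f : Fin k → Fin n × Fin n) :
    (Fin n × Fin n) × (Fin (k - 1) → Fin k × Fin 4 × Fin n) :=
  (f ⟨0, hk⟩, fun i =>
    if h : ∃ p : Fin k × Fin 4, (p.1 : ℕ) < (i : ℕ) + 1 ∧
        NCmatchRel p.2 (f ⟨(i : ℕ) + 1, by omega⟩) (f p.1)
    then (h.choose.1, h.choose.2,
      NCfree h.choose.2 (f ⟨(i : ℕ) + 1, by omega⟩))
    else (⟨0, hk⟩, 0, (f ⟨0, hk⟩).1))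

/-- The number of sequences of ordered pairs `((x₁,y₁), …, (x_k,y_k))` with entries in
`{1, …, n}` such that for every `i ≥ 2` the set `{x_i, y_i}` meets `⋃_{j<i} {x_j, y_j}`
is at most `(4k)^{k-1} · n^{k+1}`. -/
theorem nested_commutator_pair_count (n k : ℕ) (hn : 1 ≤ n) (hk : 2 ≤ k) :
    (Finset.univ.filter (fun f : Fin k → Fin n × Fin n =>
        ∀ i : Fin k, 0 < (i : ℕ) →
          ∃ j : Fin k, (j : ℕ) < (i : ℕ) ∧
            ((f i).1 = (f j).1 ∨ (f i).1 = (f j).2 ∨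
             (f i).2 = (f j).1 ∨ (f i).2 = (f j).2))).card ≤
      (4 * k) ^ (k - 1) * n ^ (k + 1) := by
  classical
  have hk0 : 0 < k := by omega
  -- existence of a matching pair for every f in the set
  have hex : ∀ f : Fin k → Fin n × Fin n,
      (∀ i : Fin k, 0 < (i : ℕ) →
        ∃ j : Fin k, (j : ℕ) < (i : ℕ) ∧
          ((f i).1 = (f j).1 ∨ (f i).1 = (f j).2 ∨
           (f i).2 = (f j).1 ∨ (f i).2 = (f j).2)) →
      ∀ i : Fin (k - 1), ∃ p : Fin k × Fin 4, (p.1 : ℕ) < (i : ℕ) + 1 ∧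
        NCmatchRel p.2 (f ⟨(i : ℕ) + 1, by omega⟩) (f p.1) := by
    intro f hf i
    obtain ⟨j, hj, hd⟩ := hf ⟨(i : ℕ) + 1, by omega⟩ (by simp)
    rcases hd with h | h | h | h
    · exact ⟨(j, 0), hj, by simpa [NCmatchRel] using h⟩
    · exact ⟨(j, 1), hj, by simpa [NCmatchRel] using h⟩
    · exact ⟨(j, 2), hj, by simpa [NCmatchRel] using h⟩
    · exact ⟨(j, 3), hj, by simpa [NCmatchRel] using h⟩
  have hinj : Set.InjOn (NCencode hk0)
      (↑(Finset.univ.filter (fun f : Fin k → Fin n × Fin n =>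
        ∀ i : Fin k, 0 < (i : ℕ) →
          ∃ j : Fin k, (j : ℕ) < (i : ℕ) ∧
            ((f i).1 = (f j).1 ∨ (f i).1 = (f j).2 ∨
             (f i).2 = (f j).1 ∨ (f i).2 = (f j).2))) : Set (Fin k → Fin n × Fin n)) := by
    intro f hfS g hgS hEq
    simp only [Finset.coe_filter, Set.mem_setOf_eq, Finset.mem_univ, true_and] at hfS hgS
    have hf := hex f hfS
    have hg := hex g hgS
    have key : ∀ m : ℕ, ∀ hm : m < k, f ⟨m, hm⟩ = g ⟨m, hm⟩ := by
      intro m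
      induction m using Nat.strong_induction_on with
      | _ m IH =>
        intro hm
        match m, hm with
        | 0, hm =>
          exact congrArg Prod.fst hEq
        | m + 1, hm =>
          set i : Fin (k - 1) := ⟨m, by omega⟩ with hi
          have hfi := hf i
          have hgi := hg i
          have hspec : ∀ (u : Fin k → Fin n × Fin n)
              (hu : ∃ p : Fin k × Fin 4, (p.1 : ℕ) < (i : ℕ) + 1 ∧
                NCmatchRel p.2 (u ⟨(i : ℕ) + 1, by omega⟩) (u p.1)),
              ∃ j : Fin k, ∃ c : Fin 4,
                (NCencode hk0 u).2 i = (j, c, NCfree c (u ⟨(i : ℕ) + 1, by omega⟩)) ∧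
                (j : ℕ) < (i : ℕ) + 1 ∧
                NCmatchRel c (u ⟨(i : ℕ) + 1, by omega⟩) (u j) := by
            intro u hu
            refine ⟨hu.choose.1, hu.choose.2, dif_pos hu, hu.choose_spec.1, hu.choose_spec.2⟩
          obtain ⟨jf, cf, hfv, hjf, hmf⟩ := hspec f hfi
          obtain ⟨jg, cg, hgv, hjg, hmg⟩ := hspec g hgi
          have h2 := hfv.symm.trans ((congrFun (congrArg Prod.snd hEq) i).trans hgv)
          obtain ⟨e1, e2, e3⟩ : jf = jg ∧ cf = cg ∧
              NCfree cf (f ⟨(i : ℕ) + 1, by omega⟩) =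
              NCfree cg (g ⟨(i : ℕ) + 1, by omega⟩) := by
            simpa [Prod.ext_iff] using h2
          have hjlt : (jf : ℕ) < m + 1 := by simpa [hi] using hjf
          have hprev : f jf = g jf := by
            have := IH (jf : ℕ) hjlt jf.isLt
            simpa using this
          have hfeq : f ⟨m + 1, hm⟩ = NCrec cf (f jf)
              (NCfree cf (f ⟨(i : ℕ) + 1, by omega⟩)) := by
            have := NCrec_eq hmf
            simpa [hi] using this.symm
          have hgeq : g ⟨m + 1, hm⟩ = NCrec cg (g jg)
              (NCfree cg (g ⟨(i : ℕ) + 1, by omega⟩)) := by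
            have := NCrec_eq hmg
            simpa [hi] using this.symm
          rw [e3, hprev, e1, e2] at hfeq
          exact hfeq.trans hgeq.symm
    funext i
    have := key i.val i.isLt
    simpa using this
  calc (Finset.univ.filter (fun f : Fin k → Fin n × Fin n =>
        ∀ i : Fin k, 0 < (i : ℕ) →
          ∃ j : Fin k, (j : ℕ) < (i : ℕ) ∧
            ((f i).1 = (f j).1 ∨ (f i).1 = (f j).2 ∨
             (f i).2 = (f j).1 ∨ (f i).2 = (f j).2))).card
      ≤ (Finset.univ : Finset ((Fin n × Fin n) × (Fin (k - 1) → Fin k × Fin 4 × Fin n))).card := by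
        exact Finset.card_le_card_of_injOn (NCencode hk0) (fun _ _ => Finset.mem_univ _) hinj
    _ = (n * n) * (k * (4 * n)) ^ (k - 1) := by
        simp [Fintype.card_prod, Fintype.card_fun, Fintype.card_fin, mul_assoc]
    _ ≤ (4 * k) ^ (k - 1) * n ^ (k + 1) := by
        apply le_of_eq
        have e1 : k * (4 * n) = (4 * k) * n := by ring
        have e2 : k + 1 = 2 + (k - 1) := by omega
        rw [e1, mul_pow, e2, pow_add]
        ring
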